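/- Let N ≥ 1, let X be an N×N complex matrix, and let A be the (2N+1)×(2N+1) matrix on the index set {v} ⊔ {s_1,…,s_N} ⊔ {t_1,…,t_N} defined by A(v, s_i) = 1, A(s_i, t_j) = X_{ij}, A(t_j, v) = 1, and 0 elsewhere. Set σ = Σ_{i,j} X_{ij}. Then the characteristic polynomial of A³ equals x^{2N−2}·(x − σ)³; in particular, the eigenvalues of A³ with multiplicity are σ (three times) and 0 (2N−2 times). -/

import Mathlib

set_option autoImplicit false

open Polynomial

/-- The adjacency matrix of the directed tripartite gadget: a utility node `v`
(the `Sum.inl` index), `N` sources and `N` targets, with edges `v → s_i` of weight `1`,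
`s_i → t_j` of weight `M i j`, and `t_j → v` of weight `1`. -/
def gadgetMatrix (N : ℕ) (M : Matrix (Fin N) (Fin N) ℂ) :
    Matrix (Unit ⊕ Fin N ⊕ Fin N) (Unit ⊕ Fin N ⊕ Fin N) ℂ :=
  Matrix.of fun p q =>
    match p, q with
    | Sum.inl _, Sum.inr (Sum.inl _) => 1
    | Sum.inr (Sum.inl i), Sum.inr (Sum.inr j) => M i j
    | Sum.inr (Sum.inr _), Sum.inl _ => 1
    | _, _ => 0

/-!
A walk of length three runs once around the cycle `v → s → t → v`, so `A³` is block diagonal: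
the `v`-block is `σ`, the source block is the rank-one matrix `d eᵀ` (row sums `d`), and the
target block is `e fᵀ` (column sums `f`). A rank-one matrix `u wᵀ` of size `n ≥ 1` has
characteristic polynomial `x^(n-1) (x - w·u)`, and both `eᵀ d` and `fᵀ e` equal `σ`.
-/

open Matrix

theorem Matrix.charpoly_vecMulVec_of_nonempty {R n : Type*} [CommRing R] [Fintype n]
    [DecidableEq n] [Nonempty n] (u v : n → R) :
    (vecMulVec u v).charpoly = X ^ (Fintype.card n - 1) * (X - C (u ⬝ᵥ v)) := by
  rw [charpoly_vecMulVec, smul_eq_C_mul, mul_sub, ← pow_succ,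
    Nat.sub_add_cancel Fintype.card_pos, mul_comm]

section SumOfEntries

variable {m n α : Type*} [Fintype m] [Fintype n] [NonAssocSemiring α]

theorem Matrix.mulVec_one_dotProduct_one (M : Matrix m n α) :
    (M *ᵥ 1) ⬝ᵥ 1 = ∑ i, ∑ j, M i j := by
  simp [mulVec, dotProduct]

theorem Matrix.one_dotProduct_one_vecMul (M : Matrix m n α) :
    1 ⬝ᵥ (1 ᵥ* M) = ∑ i, ∑ j, M i j := by
  simp only [vecMul, dotProduct, Pi.one_apply, one_mul]
  exact Finset.sum_comm

end SumOfEntries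

theorem gadgetMatrix_pow_three (N : ℕ) (M : Matrix (Fin N) (Fin N) ℂ) :
    gadgetMatrix N M ^ 3 =
      fromBlocks (vecMulVec (fun _ : Unit => ∑ i, ∑ j, M i j) 1) 0 0
        (fromBlocks (vecMulVec (M *ᵥ 1) 1) 0 0 (vecMulVec 1 (1 ᵥ* M))) := by
  ext (_ | i | i) (_ | j | j) <;>
    simp [pow_three, gadgetMatrix, mul_apply, Fintype.sum_sum_type, mulVec, vecMul, dotProduct]

/-- With `σ = Σ_{i,j} M_{ij}`, the characteristic polynomial of the
cube of the gadget matrix is `x^{2N-2}·(x - σ)³`; in particular its eigenvalues with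
multiplicity are `σ` (three times) and `0` (`2N-2` times). -/
theorem gadgetMatrix_cube_charpoly (N : ℕ) (hN : 1 ≤ N) (M : Matrix (Fin N) (Fin N) ℂ) :
    (gadgetMatrix N M ^ 3).charpoly
      = X ^ (2 * N - 2) * (X - C (∑ i, ∑ j, M i j)) ^ 3 := by
  have : Nonempty (Fin N) := ⟨⟨0, hN⟩⟩
  rw [gadgetMatrix_pow_three, charpoly_fromBlocks_zero₁₂, charpoly_fromBlocks_zero₁₂,
    charpoly_vecMulVec_of_nonempty, charpoly_vecMulVec_of_nonempty,
    charpoly_vecMulVec_of_nonempty, mulVec_one_dotProduct_one, one_dotProduct_one_vecMul,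
    dotProduct_one, Fintype.card_unit, Fintype.card_fin,
    show 2 * N - 2 = (N - 1) + (N - 1) by omega]
  simp only [Finset.univ_unique, Finset.sum_singleton]
  ring
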